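/- arXiv:math/0403041 — 4 statements merged into one kernel-verified Lean document; each statement's English description precedes it below -/
import Mathlib

section
/- Let a, b, c, r be real numbers such that (2·cosh a)² + (2·cosh b)² + (2·cosh c)² − (2·cosh a)(2·cosh b)(2·cosh c) = −2·cosh(2r) + 2. Then sinh²(a)·sinh²(b) − (cosh(a)·cosh(b) − cosh(c))² = cosh²(r). In particular, if moreover |cosh(a)cosh(b) − cosh(c)| ≤ sinh(a)sinh(b) with a,b > 0 and θ = arccos((cosh(a)cosh(b) − cosh(c))/(sinh(a)sinh(b))), then sinh²(a)·sinh²(b)·sin²(θ) = cosh²(r). -/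
/-!
Writing `X, Y, Z` for `cosh a, cosh b, cosh c`, the quantity `sinh²a sinh²b − (XY − Z)²` equals
`1 − (X² + Y² + Z² − 2XYZ)`, and the Markoff cubic divided by 4 says exactly that
`X² + Y² + Z² − 2XYZ = −sinh²r`; hence the quantity is `1 + sinh²r = cosh²r`. Being positive, it
forces `|XY − Z| < sinh a sinh b`, so `sin²θ = 1 − cos²θ` with `cos θ = (XY − Z)/(sinh a sinh b)`.
-/

open Real

lemma sinh_sq_mul_sinh_sq_sub_sq (a b c : ℝ) :
    sinh a ^ 2 * sinh b ^ 2 - (cosh a * cosh b - cosh c) ^ 2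
      = 1 - (cosh a ^ 2 + cosh b ^ 2 + cosh c ^ 2 - 2 * cosh a * cosh b * cosh c) := by
  rw [sinh_sq, sinh_sq]
  ring

lemma cosh_markoff_cubic_eq_neg_sinh_sq {a b c r : ℝ}
    (h : (2 * cosh a) ^ 2 + (2 * cosh b) ^ 2 + (2 * cosh c) ^ 2
        - (2 * cosh a) * (2 * cosh b) * (2 * cosh c) = -2 * cosh (2 * r) + 2) :
    cosh a ^ 2 + cosh b ^ 2 + cosh c ^ 2 - 2 * cosh a * cosh b * cosh c = -sinh r ^ 2 := by
  rw [cosh_two_mul, cosh_sq] at h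
  linarith

lemma sq_mul_sin_arccos_div_sq {d s : ℝ} (h : d ^ 2 ≤ s ^ 2) :
    s ^ 2 * sin (arccos (d / s)) ^ 2 = s ^ 2 - d ^ 2 := by
  rcases eq_or_ne s 0 with rfl | hs
  · nlinarith [sq_nonneg d]
  have hds : (d / s) ^ 2 ≤ 1 := by
    rwa [div_pow, div_le_one (by positivity)]
  rw [sin_arccos, sq_sqrt (by linarith)]
  field_simp

/-- If the traces `2cosh a, 2cosh b, 2cosh c` satisfy the generalized Markoff cubic with
boundary term `−2cosh(2r)+2`, then `sinh²a sinh²b − (cosh a cosh b − cosh c)² = cosh²r`;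
in particular with `θ = arccos((cosh a cosh b − cosh c)/(sinh a sinh b))` one has
`sinh²a sinh²b sin²θ = cosh²r`. -/
theorem markoff_cubic_angle_relation (a b c r : ℝ)
    (h : (2 * Real.cosh a) ^ 2 + (2 * Real.cosh b) ^ 2 + (2 * Real.cosh c) ^ 2
        - (2 * Real.cosh a) * (2 * Real.cosh b) * (2 * Real.cosh c)
        = -2 * Real.cosh (2 * r) + 2) :
    Real.sinh a ^ 2 * Real.sinh b ^ 2
        - (Real.cosh a * Real.cosh b - Real.cosh c) ^ 2 = Real.cosh r ^ 2
    ∧ (∀ θ : ℝ,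
        |Real.cosh a * Real.cosh b - Real.cosh c| ≤ Real.sinh a * Real.sinh b →
        0 < a → 0 < b →
        θ = Real.arccos ((Real.cosh a * Real.cosh b - Real.cosh c)
              / (Real.sinh a * Real.sinh b)) →
        Real.sinh a ^ 2 * Real.sinh b ^ 2 * Real.sin θ ^ 2 = Real.cosh r ^ 2) := by
  have key : sinh a ^ 2 * sinh b ^ 2 - (cosh a * cosh b - cosh c) ^ 2 = cosh r ^ 2 := by
    rw [sinh_sq_mul_sinh_sq_sub_sq, cosh_markoff_cubic_eq_neg_sinh_sq h, cosh_sq']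
    ring
  refine ⟨key, ?_⟩
  rintro θ - - - rfl
  have hle : (cosh a * cosh b - cosh c) ^ 2 ≤ (sinh a * sinh b) ^ 2 := by
    rw [mul_pow]
    linarith [sq_nonneg (cosh r)]
  rw [← mul_pow, sq_mul_sin_arccos_div_sq hle, mul_pow, key]
end

section
/- Let ‖·‖ be a norm on ℝ², and let e₁, e₂ be a ℤ-basis of the integer lattice ℤ² such that ‖e₁‖ ≤ ‖e₂‖ and ‖e₂‖ ≤ ‖v‖ for every v ∈ ℤ² with v ∉ {0, e₁, −e₁} (i.e. e₁ and e₂ are the two shortest integer vectors). Then for all real numbers x, y: ‖x·e₁ + y·e₂‖ ≥ (1/2)·max( |x|·‖e₁‖ , |y|·‖e₂‖ ); in particular ‖x·e₁ + y·e₂‖ ≥ (1/4)·( |x|·‖e₁‖ + |y|·‖e₂‖ ). -/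
/-!
Write `L = N (x • E₁ + y • E₂)`. Rounding `x / y` to an integer `m` and comparing with the lattice
vector `m • E₁ + E₂`, which is no shorter than `E₂`, gives `|y| N E₂ ≤ 2 L`, since the rounding error
costs at most `|y| N E₁ / 2 ≤ |y| N E₂ / 2`. If `|y| ≤ |x|`, comparing with the better of
`E₁ ± E₂` gives `|y| N E₂ ≤ L`, and together with the triangle inequality
`|x| N E₁ - |y| N E₂ ≤ L` this yields `|x| N E₁ ≤ 2 L`; if `|x| ≤ |y|` the maximum is `|y| N E₂`.
The lattice input is that every integer vector with nonzero `e₂`-coefficient is different from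
`0, ±e₁`: a spanning pair of `ℤ²` is independent because a surjective endomorphism of `ℤ²` is
injective.
-/

theorem exists_int_ne_zero_abs_mul_sub_le {x y : ℝ} (hxy : |y| ≤ |x|) :
    ∃ n : ℤ, n ≠ 0 ∧ |x * n - y| ≤ |x| - |y| := by
  rcases le_total 0 (x * y) with hsign | hsign
  · refine ⟨1, one_ne_zero, ?_⟩
    rw [Int.cast_one, mul_one, abs_le]
    cases abs_cases x <;> cases abs_cases y <;> constructor <;> nlinarith
  · refine ⟨-1, by norm_num, ?_⟩
    rw [Int.cast_neg, Int.cast_one, mul_neg_one, abs_le]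
    cases abs_cases x <;> cases abs_cases y <;> constructor <;> nlinarith

namespace Seminorm

variable {E : Type*} [AddCommGroup E] [Module ℝ E] (p : Seminorm ℝ E)

theorem abs_mul_apply_le_apply_add (u v : E) (a b c x y : ℝ) :
    |c| * p (a • u + b • v) ≤ p (x • u + y • v) + |c * a - x| * p u + |c * b - y| * p v := by
  have hsplit : c • (a • u + b • v) = (x • u + y • v) + ((c * a - x) • u + (c * b - y) • v) := by
    simp only [smul_add, smul_smul, sub_smul]
    abel
  calc |c| * p (a • u + b • v) = p (c • (a • u + b • v)) := (map_smul_eq_mul p c _).symm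
    _ ≤ p (x • u + y • v) + (p ((c * a - x) • u) + p ((c * b - y) • v)) := by
      rw [hsplit]
      exact (map_add_le_add p _ _).trans (add_le_add le_rfl (map_add_le_add p _ _))
    _ = _ := by rw [map_smul_eq_mul, map_smul_eq_mul, Real.norm_eq_abs, Real.norm_eq_abs, add_assoc]

theorem abs_mul_apply_sub_le (u v : E) (x y : ℝ) : |x| * p u - |y| * p v ≤ p (x • u + y • v) := by
  have := p.abs_mul_apply_le_apply_add u v 1 0 x x y
  simp only [one_smul, zero_smul, add_zero, mul_one, mul_zero, sub_self, abs_zero, zero_mul,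
    zero_sub, abs_neg] at this
  linarith

theorem abs_mul_apply_right_le_two_mul {u v : E} (huv : p u ≤ p v)
    (hshort : ∀ m n : ℤ, n ≠ 0 → p v ≤ p ((m : ℝ) • u + (n : ℝ) • v)) (x y : ℝ) :
    |y| * p v ≤ 2 * p (x • u + y • v) := by
  rcases eq_or_ne y 0 with rfl | hy
  · simp
  set m := round (x / y)
  have hround : |y * m - x| ≤ |y| / 2 := by
    calc |y * m - x| = |y| * |x / y - m| := by
          rw [← abs_mul, abs_sub_comm]; congr 1; field_simp
      _ ≤ |y| * (1 / 2) := by gcongr; exact abs_sub_round _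
      _ = |y| / 2 := by ring
  have : |y| * p v ≤ p (x • u + y • v) + |y| / 2 * p v :=
    calc |y| * p v ≤ |y| * p ((m : ℝ) • u + (1 : ℝ) • v) := by
          gcongr; exact_mod_cast hshort m 1 one_ne_zero
      _ ≤ p (x • u + y • v) + |y * m - x| * p u + |y * 1 - y| * p v :=
          p.abs_mul_apply_le_apply_add u v _ _ _ _ _
      _ ≤ p (x • u + y • v) + |y| / 2 * p v := by
          rw [mul_one, sub_self, abs_zero, zero_mul, add_zero]; gcongr
  linarith

theorem abs_mul_apply_right_le_of_abs_le {u v : E}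
    (hshort : ∀ m n : ℤ, n ≠ 0 → p v ≤ p ((m : ℝ) • u + (n : ℝ) • v)) {x y : ℝ}
    (hxy : |y| ≤ |x|) : |y| * p v ≤ p (x • u + y • v) := by
  obtain ⟨n, hn, hxn⟩ := exists_int_ne_zero_abs_mul_sub_le hxy
  have : |x| * p v ≤ p (x • u + y • v) + (|x| - |y|) * p v :=
    calc |x| * p v ≤ |x| * p ((1 : ℝ) • u + (n : ℝ) • v) := by
          gcongr; exact_mod_cast hshort 1 n hn
      _ ≤ p (x • u + y • v) + |x * 1 - x| * p u + |x * n - y| * p v :=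
          p.abs_mul_apply_le_apply_add u v _ _ _ _ _
      _ ≤ p (x • u + y • v) + (|x| - |y|) * p v := by
          rw [mul_one, sub_self, abs_zero, zero_mul, add_zero]; gcongr
  linarith

theorem max_abs_mul_apply_le_two_mul {u v : E} (huv : p u ≤ p v)
    (hshort : ∀ m n : ℤ, n ≠ 0 → p v ≤ p ((m : ℝ) • u + (n : ℝ) • v)) (x y : ℝ) :
    max (|x| * p u) (|y| * p v) ≤ 2 * p (x • u + y • v) := by
  rcases le_total |y| |x| with hxy | hxy
  · have := p.abs_mul_apply_right_le_of_abs_le hshort hxy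
    have := p.abs_mul_apply_sub_le u v x y
    exact max_le (by linarith) (by linarith [apply_nonneg p (x • u + y • v)])
  · have hle : |x| * p u ≤ |y| * p v := mul_le_mul hxy huv (apply_nonneg p u) (abs_nonneg y)
    rw [max_eq_right hle]
    exact p.abs_mul_apply_right_le_two_mul huv hshort x y

end Seminorm

theorem smul_add_smul_ne_smul_of_forall_exists {e₁ e₂ : ℤ × ℤ}
    (hspan : ∀ v : ℤ × ℤ, ∃ m n : ℤ, v = m • e₁ + n • e₂) {m n : ℤ} (hn : n ≠ 0) (k : ℤ) :
    m • e₁ + n • e₂ ≠ k • e₁ := by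
  let f : ℤ × ℤ →ₗ[ℤ] ℤ × ℤ :=
    (LinearMap.toSpanSingleton ℤ _ e₁).coprod (LinearMap.toSpanSingleton ℤ _ e₂)
  have hf : Function.Injective f := by
    refine OrzechProperty.injective_of_surjective_endomorphism f fun v => ?_
    obtain ⟨m, n, rfl⟩ := hspan v
    exact ⟨(m, n), by simp [f]⟩
  intro h
  have := @hf (m, n) (k, 0) (by simpa [f] using h)
  exact hn (Prod.ext_iff.mp this).2

theorem norm_lower_bound_of_shortest_basis_general
    (N : ℝ × ℝ → ℝ)
    (N_add : ∀ v w, N (v + w) ≤ N v + N w)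
    (N_smul : ∀ (c : ℝ) v, N (c • v) = |c| * N v)
    (e₁ e₂ : ℤ × ℤ)
    (hbasis : ∀ v : ℤ × ℤ, ∃ m n : ℤ, v = m • e₁ + n • e₂)
    (E₁ E₂ : ℝ × ℝ)
    (hE₁ : E₁ = ((e₁.1 : ℝ), (e₁.2 : ℝ))) (hE₂ : E₂ = ((e₂.1 : ℝ), (e₂.2 : ℝ)))
    (h₁₂ : N E₁ ≤ N E₂)
    (h₂ : ∀ v : ℤ × ℤ, v ≠ 0 → v ≠ e₁ → v ≠ -e₁ →
      N E₂ ≤ N ((v.1 : ℝ), (v.2 : ℝ))) :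
    ∀ x y : ℝ,
      N (x • E₁ + y • E₂) ≥ (1 / 2) * max (|x| * N E₁) (|y| * N E₂)
      ∧ N (x • E₁ + y • E₂) ≥ (1 / 4) * (|x| * N E₁ + |y| * N E₂) := by
  intro x y
  let p : Seminorm ℝ (ℝ × ℝ) := Seminorm.of N N_add fun c v => by rw [N_smul, Real.norm_eq_abs]
  have hcast (m n : ℤ) : (((m • e₁ + n • e₂).1 : ℝ), ((m • e₁ + n • e₂).2 : ℝ)) =
      (m : ℝ) • E₁ + (n : ℝ) • E₂ := by
    subst hE₁ hE₂; ext <;> simp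
  have hshort (m n : ℤ) (hn : n ≠ 0) : p E₂ ≤ p ((m : ℝ) • E₁ + (n : ℝ) • E₂) := by
    have hne := smul_add_smul_ne_smul_of_forall_exists hbasis (m := m) hn
    rw [← hcast]
    exact h₂ _ (by simpa using hne 0) (by simpa using hne 1) (by simpa using hne (-1))
  have key : max (|x| * N E₁) (|y| * N E₂) ≤ 2 * N (x • E₁ + y • E₂) :=
    p.max_abs_mul_apply_le_two_mul h₁₂ hshort x y
  obtain ⟨hx, hy⟩ := max_le_iff.mp key
  exact ⟨by linarith, by linarith⟩

/-- Norm-geometry claim: if `e₁, e₂` is a ℤ-basis of the integer lattice `ℤ² ⊂ ℝ²` whose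
members are the two shortest nonzero integer vectors for a norm `N` on `ℝ²`, then for all
reals `x, y` one has `N(x·e₁ + y·e₂) ≥ (1/2)·max(|x|·N e₁, |y|·N e₂)`, and in particular
`N(x·e₁ + y·e₂) ≥ (1/4)·(|x|·N e₁ + |y|·N e₂)`. -/
theorem norm_lower_bound_of_shortest_basis
    (N : ℝ × ℝ → ℝ)
    (N_add : ∀ v w, N (v + w) ≤ N v + N w)
    (N_smul : ∀ (c : ℝ) v, N (c • v) = |c| * N v)
    (N_eq_zero : ∀ v, N v = 0 ↔ v = 0)
    (e₁ e₂ : ℤ × ℤ)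
    (hbasis : ∀ v : ℤ × ℤ, ∃ m n : ℤ, v = m • e₁ + n • e₂)
    (E₁ E₂ : ℝ × ℝ)
    (hE₁ : E₁ = ((e₁.1 : ℝ), (e₁.2 : ℝ))) (hE₂ : E₂ = ((e₂.1 : ℝ), (e₂.2 : ℝ)))
    (h₁₂ : N E₁ ≤ N E₂)
    (h₂ : ∀ v : ℤ × ℤ, v ≠ 0 → v ≠ e₁ → v ≠ -e₁ →
      N E₂ ≤ N ((v.1 : ℝ), (v.2 : ℝ))) :
    ∀ x y : ℝ,
      N (x • E₁ + y • E₂) ≥ (1 / 2) * max (|x| * N E₁) (|y| * N E₂)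
      ∧ N (x • E₁ + y • E₂) ≥ (1 / 4) * (|x| * N E₁ + |y| * N E₂) :=
  norm_lower_bound_of_shortest_basis_general N N_add N_smul e₁ e₂ hbasis E₁ E₂ hE₁ hE₂ h₁₂ h₂
end

section
/- Let ‖·‖ be a norm on ℝ², and let e₁, e₂ be a ℤ-basis of ℤ² with ‖e₁‖ ≤ ‖e₂‖ ≤ ‖v‖ for every v ∈ ℤ² with v ∉ {0, e₁, −e₁}. Then for every t > 0 and every integer N ≥ 1, the family (m,n) ↦ exp(−t·‖m·e₁ + n·e₂‖), indexed by pairs (m,n) ∈ ℤ² with |n| ≥ N, is summable, and its sum is at most 4·exp(−t·N·‖e₂‖/4) / ( (1 − exp(−t·‖e₁‖/4))·(1 − exp(−t·‖e₂‖/4)) ). -/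
open Real

/-! With `v = m • e₁ + n • e₂`, minimality of `e₂` away from `±e₁` gives `‖e₂‖ ≤ ‖e₁ ± e₂‖`. For
`0 ≤ m ≤ n`, the triangle inequality for `n • (e₁ + e₂) = v + (n - m) • e₁` together with
`m • e₁ = v - n • e₂` yields `m ‖e₁‖ + n ‖e₂‖ ≤ 3 ‖v‖`; the case `n ≤ m` is symmetric, and the
signs of `m, n` are absorbed by `e₁ ↦ -e₁` and `v ↦ -v`. Each summand is then at most
`r ^ |m| * s ^ |n|` with `r = exp (-t ‖e₁‖ / 4)` and `s = exp (-t ‖e₂‖ / 4)`, and the sum over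
`|n| ≥ N` is bounded by a product of two geometric series. -/

namespace Seminorm

variable {E : Type*} [AddCommGroup E] [Module ℝ E] (p : Seminorm ℝ E) {A B : E}

theorem apply_smul_of_nonneg {c : ℝ} (hc : 0 ≤ c) (x : E) : p (c • x) = c * p x := by
  rw [map_smul_eq_mul, norm_of_nonneg hc]

theorem mul_add_mul_le_three_mul (hAB : p A ≤ p B) (hB : p B ≤ p (A + B)) {m n : ℝ}
    (hm : 0 ≤ m) (hn : 0 ≤ n) : m * p A + n * p B ≤ 3 * p (m • A + n • B) := by
  set v := m • A + n • B
  rcases le_total m n with hmn | hnm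
  · have hnB : n * p B ≤ p v + m * p A := by
      have := map_add_le_add p v (-(m • A))
      rwa [map_neg_eq_map, add_neg_cancel_comm, p.apply_smul_of_nonneg hm,
        p.apply_smul_of_nonneg hn] at this
    have := map_add_le_add p v ((n - m) • A)
    rw [show v + (n - m) • A = n • (A + B) by module, p.apply_smul_of_nonneg hn,
      p.apply_smul_of_nonneg (sub_nonneg.2 hmn)] at this
    linarith [mul_le_mul_of_nonneg_left hB hn, mul_le_mul_of_nonneg_left hAB hn]
  · have hmA : m * p A ≤ p v + n * p B := by
      have := map_add_le_add p v (-(n • B))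
      rwa [map_neg_eq_map, add_neg_cancel_right, p.apply_smul_of_nonneg hm,
        p.apply_smul_of_nonneg hn] at this
    have := map_add_le_add p v ((m - n) • B)
    rw [show v + (m - n) • B = m • (A + B) by module, p.apply_smul_of_nonneg hm,
      p.apply_smul_of_nonneg (sub_nonneg.2 hnm)] at this
    linarith [mul_le_mul_of_nonneg_left hB hm]

theorem abs_mul_add_abs_mul_le_three_mul (hAB : p A ≤ p B) (hadd : p B ≤ p (A + B))
    (hsub : p B ≤ p (B - A)) (m n : ℝ) : |m| * p A + |n| * p B ≤ 3 * p (m • A + n • B) := by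
  wlog hn : 0 ≤ n generalizing m n
  · have := this (-m) (-n) (by linarith)
    rwa [abs_neg, abs_neg, neg_smul, neg_smul, ← neg_add, map_neg_eq_map] at this
  rcases le_total 0 m with hm | hm
  · rw [abs_of_nonneg hm, abs_of_nonneg hn]
    exact p.mul_add_mul_le_three_mul hAB hadd hm hn
  · have := p.mul_add_mul_le_three_mul (A := -A) (B := B) (by rwa [map_neg_eq_map])
      (by rwa [neg_add_eq_sub]) (neg_nonneg.2 hm) hn
    rw [abs_of_nonpos hm, abs_of_nonneg hn]
    rwa [map_neg_eq_map, neg_smul_neg] at this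

end Seminorm

section Span

variable {e₁ e₂ : ℤ × ℤ}

theorem ne_zero_of_span (hspan : ∀ v : ℤ × ℤ, ∃ m n : ℤ, v = m • e₁ + n • e₂) : e₁ ≠ 0 := by
  rintro rfl
  refine not_isAddCyclic_prod_of_infinite_nontrivial ℤ ℤ ⟨⟨e₂, fun v => ?_⟩⟩
  obtain ⟨m, n, rfl⟩ := hspan v
  exact ⟨n, by rw [smul_zero, zero_add]⟩

theorem zsmul_add_ne_zero_of_span (hspan : ∀ v : ℤ × ℤ, ∃ m n : ℤ, v = m • e₁ + n • e₂) (k : ℤ) :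
    k • e₁ + e₂ ≠ 0 := by
  intro h
  refine not_isAddCyclic_prod_of_infinite_nontrivial ℤ ℤ ⟨⟨e₁, fun v => ?_⟩⟩
  obtain ⟨m, n, rfl⟩ := hspan v
  refine ⟨m - n * k, ?_⟩
  rw [eq_neg_of_add_eq_zero_right h, smul_neg, smul_smul]
  exact (sub_smul ..).trans (sub_eq_add_neg ..)

theorem zsmul_add_ne_of_span (hspan : ∀ v : ℤ × ℤ, ∃ m n : ℤ, v = m • e₁ + n • e₂) (k : ℤ) :
    k • e₁ + e₂ ≠ 0 ∧ k • e₁ + e₂ ≠ e₁ ∧ k • e₁ + e₂ ≠ -e₁ := by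
  refine ⟨zsmul_add_ne_zero_of_span hspan k, fun h => ?_, fun h => ?_⟩
  · apply zsmul_add_ne_zero_of_span hspan (k - 1)
    rw [sub_smul, one_smul, sub_add_eq_add_sub, h, sub_self]
  · apply zsmul_add_ne_zero_of_span hspan (k + 1)
    rw [add_smul, one_smul, add_right_comm, h, neg_add_cancel]

end Span

section Geometric

variable {r : ℝ}

theorem hasSum_ite_le_pow (h0 : 0 ≤ r) (h1 : r < 1) (N₀ : ℕ) :
    HasSum (fun k : ℕ => if N₀ ≤ k then r ^ k else 0) (r ^ N₀ / (1 - r)) := by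
  rw [← hasSum_nat_add_iff' N₀]
  simp only [le_add_iff_nonneg_left, zero_le, if_true, pow_add]
  rw [Finset.sum_eq_zero fun k hk => if_neg (by simpa using hk), sub_zero, div_eq_mul_inv]
  simpa only [mul_comm] using (hasSum_geometric_of_lt_one h0 h1).mul_left (r ^ N₀)

theorem hasSum_pow_natAbs (h0 : 0 ≤ r) (h1 : r < 1) :
    HasSum (fun n : ℤ => r ^ n.natAbs) (2 / (1 - r) - 1) := by
  have h := hasSum_geometric_of_lt_one h0 h1
  have := HasSum.of_nat_of_neg (f := fun n : ℤ => r ^ n.natAbs) (by simpa using h)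
    (by simpa using h)
  rwa [Int.natAbs_zero, pow_zero, ← two_mul, ← div_eq_mul_inv] at this

theorem hasSum_indicator_pow_natAbs (h0 : 0 ≤ r) (h1 : r < 1) {N₀ : ℕ} (hN₀ : 1 ≤ N₀) :
    HasSum ({n : ℤ | (N₀ : ℤ) ≤ |n|}.indicator fun n => r ^ n.natAbs) (2 * r ^ N₀ / (1 - r)) := by
  have h := hasSum_ite_le_pow h0 h1 N₀
  have := HasSum.of_nat_of_neg (f := {n : ℤ | (N₀ : ℤ) ≤ |n|}.indicator fun n => r ^ n.natAbs)
    (by simpa [Set.indicator_apply] using h) (by simpa [Set.indicator_apply] using h)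
  rwa [Set.indicator_of_notMem (by simp; omega), sub_zero, ← two_mul, ← mul_div_assoc] at this

end Geometric

theorem summable_and_tsum_le_of_le_pow_natAbs {r s : ℝ} (hr0 : 0 ≤ r) (hr1 : r < 1)
    (hs0 : 0 ≤ s) (hs1 : s < 1) {N₀ : ℕ} (hN₀ : 1 ≤ N₀) {f : ℤ × ℤ → ℝ} (hf0 : ∀ p, 0 ≤ f p)
    (hf : ∀ p : ℤ × ℤ, f p ≤ r ^ p.1.natAbs * s ^ p.2.natAbs) :
    Summable (fun p : {p : ℤ × ℤ // (N₀ : ℤ) ≤ |p.2|} => f p) ∧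
      ∑' p : {p : ℤ × ℤ // (N₀ : ℤ) ≤ |p.2|}, f p ≤ 4 * s ^ N₀ / ((1 - r) * (1 - s)) := by
  have hr := hasSum_pow_natAbs hr0 hr1
  have hs := hasSum_indicator_pow_natAbs hs0 hs1 hN₀
  have hbound : HasSum (fun p : {p : ℤ × ℤ // (N₀ : ℤ) ≤ |p.2|} =>
      r ^ p.1.1.natAbs * s ^ p.1.2.natAbs) ((2 / (1 - r) - 1) * (2 * s ^ N₀ / (1 - s))) := by
    have hprod := hr.mul hs <| hr.summable.mul_of_nonneg hs.summable (fun _ => by positivity)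
      (Set.indicator_nonneg fun _ _ => by positivity)
    refine (hasSum_subtype_iff_indicator (f := fun p : ℤ × ℤ => r ^ p.1.natAbs * s ^ p.2.natAbs)
      (s := {p | (N₀ : ℤ) ≤ |p.2|})).2 (hprod.congr_fun fun p => ?_)
    by_cases hp : (N₀ : ℤ) ≤ |p.2| <;> simp [hp]
  have hle (p : {p : ℤ × ℤ // (N₀ : ℤ) ≤ |p.2|}) := hf p
  have hsum := Summable.of_nonneg_of_le (fun p : {p : ℤ × ℤ // (N₀ : ℤ) ≤ |p.2|} => hf0 p) hle
    hbound.summable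
  refine ⟨hsum, (hasSum_le hle hsum.hasSum hbound).trans ?_⟩
  calc (2 / (1 - r) - 1) * (2 * s ^ N₀ / (1 - s))
      ≤ 2 / (1 - r) * (2 * s ^ N₀ / (1 - s)) := by
        gcongr
        exact sub_le_self _ zero_le_one
    _ = 4 * s ^ N₀ / ((1 - r) * (1 - s)) := by
        field_simp
        ring

theorem exp_neg_mul_le_pow_mul_pow {t a b x : ℝ} (ht : 0 ≤ t) {m n : ℕ}
    (h : m * a + n * b ≤ 4 * x) : exp (-t * x) ≤ exp (-t * a / 4) ^ m * exp (-t * b / 4) ^ n := by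
  rw [← exp_nat_mul, ← exp_nat_mul, ← exp_add, exp_le_exp]
  nlinarith

/-- Geometric-series bound: with `e₁, e₂` the two shortest integer vectors forming a
ℤ-basis of `ℤ²` for a norm `N` on `ℝ²`, for every `t > 0` and integer `N₀ ≥ 1` the family
`(m,n) ↦ exp(−t·N(m·e₁+n·e₂))` over pairs with `|n| ≥ N₀` is summable, with sum at most
`4·exp(−t·N₀·N e₂/4) / ((1 − exp(−t·N e₁/4))·(1 − exp(−t·N e₂/4)))`. -/
theorem summable_exp_neg_norm_lattice
    (N : ℝ × ℝ → ℝ)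
    (N_add : ∀ v w, N (v + w) ≤ N v + N w)
    (N_smul : ∀ (c : ℝ) v, N (c • v) = |c| * N v)
    (N_eq_zero : ∀ v, N v = 0 ↔ v = 0)
    (e₁ e₂ : ℤ × ℤ)
    (hbasis : ∀ v : ℤ × ℤ, ∃ m n : ℤ, v = m • e₁ + n • e₂)
    (E₁ E₂ : ℝ × ℝ)
    (hE₁ : E₁ = ((e₁.1 : ℝ), (e₁.2 : ℝ))) (hE₂ : E₂ = ((e₂.1 : ℝ), (e₂.2 : ℝ)))
    (h₁₂ : N E₁ ≤ N E₂)
    (h₂ : ∀ v : ℤ × ℤ, v ≠ 0 → v ≠ e₁ → v ≠ -e₁ →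
      N E₂ ≤ N ((v.1 : ℝ), (v.2 : ℝ)))
    (t : ℝ) (ht : 0 < t) (N₀ : ℤ) (hN₀ : 1 ≤ N₀) :
    Summable (fun p : {p : ℤ × ℤ // N₀ ≤ |p.2|} =>
        Real.exp (-t * N ((p.1.1 : ℝ) • E₁ + (p.1.2 : ℝ) • E₂)))
    ∧ (∑' p : {p : ℤ × ℤ // N₀ ≤ |p.2|},
          Real.exp (-t * N ((p.1.1 : ℝ) • E₁ + (p.1.2 : ℝ) • E₂)))
        ≤ 4 * Real.exp (-t * (N₀ : ℝ) * N E₂ / 4)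
          / ((1 - Real.exp (-t * N E₁ / 4)) * (1 - Real.exp (-t * N E₂ / 4))) := by
  lift N₀ to ℕ using by omega
  let p : Seminorm ℝ (ℝ × ℝ) := .of N N_add fun c v => by rw [N_smul, norm_eq_abs]
  have hN_nonneg (v : ℝ × ℝ) : 0 ≤ N v := apply_nonneg p v
  have hE₁_pos : 0 < N E₁ := (hN_nonneg E₁).lt_of_ne' fun h =>
    ne_zero_of_span hbasis (by simpa [hE₁, Prod.ext_iff] using (N_eq_zero E₁).1 h)
  have hE₂_le (k : ℤ) : N E₂ ≤ N ((k : ℝ) • E₁ + E₂) := by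
    obtain ⟨h0, h1, h2⟩ := zsmul_add_ne_of_span hbasis k
    simpa [hE₁, hE₂] using h₂ _ h0 h1 h2
  have key (m n : ℤ) :
      (m.natAbs : ℝ) * N E₁ + n.natAbs * N E₂ ≤ 4 * N ((m : ℝ) • E₁ + (n : ℝ) • E₂) := by
    have : |(m : ℝ)| * N E₁ + |(n : ℝ)| * N E₂ ≤ 3 * N ((m : ℝ) • E₁ + (n : ℝ) • E₂) :=
      p.abs_mul_add_abs_mul_le_three_mul h₁₂ (by simpa using hE₂_le 1 : N E₂ ≤ N (E₁ + E₂))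
        (by simpa [sub_eq_neg_add] using hE₂_le (-1) : N E₂ ≤ N (E₂ - E₁)) m n
    push_cast [Nat.cast_natAbs, Int.cast_abs]
    linarith [hN_nonneg ((m : ℝ) • E₁ + (n : ℝ) • E₂)]
  have hexp_lt_one {x : ℝ} (hx : 0 < x) : exp (-t * x / 4) < 1 := exp_lt_one_iff.2 (by nlinarith)
  obtain ⟨hsum, hle⟩ := summable_and_tsum_le_of_le_pow_natAbs (exp_pos _).le
    (hexp_lt_one hE₁_pos) (exp_pos _).le (hexp_lt_one (hE₁_pos.trans_le h₁₂))
    (by exact_mod_cast hN₀) (f := fun q => exp (-t * N ((q.1 : ℝ) • E₁ + (q.2 : ℝ) • E₂)))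
    (fun _ => (exp_pos _).le) fun q => exp_neg_mul_le_pow_mul_pow ht.le (key q.1 q.2)
  refine ⟨hsum, hle.trans_eq ?_⟩
  rw [← exp_nat_mul]
  push_cast
  ring_nf
end

section
/- For every function θ : ℝ → ℝ, the limit as s tends to 0 from the right of the sum ∑_{n ∈ ℤ} (s/2)·sech( n·s/2 + θ(s) ) exists and equals π. That is, the function s ↦ ∑_{n∈ℤ} (s/2)/cosh(n·s/2 + θ(s)) tends to π as s → 0⁺ (the sum being absolutely convergent for each s > 0). -/
open Real Filter

/-- Antiderivative of `sech`. -/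
noncomputable def sechPrim (x : ℝ) : ℝ := Real.arctan (Real.sinh x)

lemma sechPrim_hasDerivAt (x : ℝ) : HasDerivAt sechPrim (1 / Real.cosh x) x := by
  have h := (Real.hasDerivAt_arctan (Real.sinh x)).comp x (Real.hasDerivAt_sinh x)
  have hc : (0:ℝ) < Real.cosh x := Real.cosh_pos x
  refine h.congr_deriv ?_
  symm
  rw [← Real.cosh_sq']
  field_simp

lemma sech_continuous : Continuous fun u : ℝ => 1 / Real.cosh u :=
  continuous_const.div Real.continuous_cosh fun x => (Real.cosh_pos x).ne'

lemma sechPrim_sub_eq (a b : ℝ) :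
    sechPrim b - sechPrim a = ∫ u in a..b, 1 / Real.cosh u :=
  (intervalIntegral.integral_eq_sub_of_hasDerivAt
    (fun x _ => sechPrim_hasDerivAt x) ((sech_continuous).intervalIntegrable a b)).symm

lemma sechPrim_mono : Monotone sechPrim :=
  fun _ _ hab => Real.arctan_strictMono.monotone (Real.sinh_le_sinh.mpr hab)

lemma sechPrim_zero : sechPrim 0 = 0 := by simp [sechPrim]

lemma sechPrim_neg (x : ℝ) : sechPrim (-x) = - sechPrim x := by
  simp [sechPrim, Real.sinh_neg, Real.arctan_neg]

lemma sechPrim_lt : ∀ x : ℝ, sechPrim x < π / 2 :=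
  fun _ => Real.arctan_lt_pi_div_two _

lemma lt_sechPrim : ∀ x : ℝ, -(π / 2) < sechPrim x :=
  fun _ => Real.neg_pi_div_two_lt_arctan _

lemma sechPrim_sub_le {a b : ℝ} (hab : a ≤ b) : sechPrim b - sechPrim a ≤ b - a := by
  rw [sechPrim_sub_eq]
  calc ∫ u in a..b, 1 / Real.cosh u ≤ ∫ _ in a..b, (1:ℝ) := by
        apply intervalIntegral.integral_mono_on hab
          ((sech_continuous).intervalIntegrable a b) (intervalIntegrable_const)
        intro u _
        rw [div_le_one (Real.cosh_pos u)]
        exact Real.one_le_cosh u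
    _ = b - a := by simp

/-- Lower bound for the increment on `[a,b] ⊆ [0,∞)`. -/
lemma sechPrim_incr_lower {a b : ℝ} (ha : 0 ≤ a) (hab : a ≤ b) :
    (b - a) * (1 / Real.cosh b) ≤ sechPrim b - sechPrim a := by
  rw [sechPrim_sub_eq]
  have heq : (b - a) * (1 / Real.cosh b) = ∫ _ in a..b, 1 / Real.cosh b := by
    rw [intervalIntegral.integral_const, smul_eq_mul]
  rw [heq]
  apply intervalIntegral.integral_mono_on hab (intervalIntegrable_const)
    ((sech_continuous).intervalIntegrable a b)
  intro u hu
  apply one_div_le_one_div_of_le (Real.cosh_pos u)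
  rw [Real.cosh_le_cosh, abs_of_nonneg (ha.trans hu.1), abs_of_nonneg (ha.trans hab)]
  exact hu.2

/-- Upper bound for the increment on `[a,b] ⊆ [0,∞)`. -/
lemma sechPrim_incr_upper {a b : ℝ} (ha : 0 ≤ a) (hab : a ≤ b) :
    sechPrim b - sechPrim a ≤ (b - a) * (1 / Real.cosh a) := by
  rw [sechPrim_sub_eq]
  have heq : (b - a) * (1 / Real.cosh a) = ∫ _ in a..b, 1 / Real.cosh a := by
    rw [intervalIntegral.integral_const, smul_eq_mul]
  rw [heq]
  apply intervalIntegral.integral_mono_on hab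
    ((sech_continuous).intervalIntegrable a b) (intervalIntegrable_const)
  intro u hu
  apply one_div_le_one_div_of_le (Real.cosh_pos a)
  rw [Real.cosh_le_cosh, abs_of_nonneg ha, abs_of_nonneg (ha.trans hu.1)]
  exact hu.1

/-- Lower bound for the increment on `[a,b] ⊆ (-∞,0]`. -/
lemma sechPrim_decr_lower {a b : ℝ} (hb : b ≤ 0) (hab : a ≤ b) :
    (b - a) * (1 / Real.cosh a) ≤ sechPrim b - sechPrim a := by
  have h := sechPrim_incr_lower (a := -b) (b := -a) (by linarith) (by linarith)
  rw [sechPrim_neg, sechPrim_neg, Real.cosh_neg] at h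
  linarith

/-- Upper bound for the increment on `[a,b] ⊆ (-∞,0]`. -/
lemma sechPrim_decr_upper {a b : ℝ} (hb : b ≤ 0) (hab : a ≤ b) :
    sechPrim b - sechPrim a ≤ (b - a) * (1 / Real.cosh b) := by
  have h := sechPrim_incr_upper (a := -b) (b := -a) (by linarith) (by linarith)
  rw [sechPrim_neg, sechPrim_neg, Real.cosh_neg] at h
  linarith

lemma tendsto_sechPrim_atTop : Tendsto sechPrim atTop (nhds (π / 2)) := by
  have hsinh : Tendsto Real.sinh atTop atTop := by
    apply tendsto_atTop_mono' atTop
    · filter_upwards [eventually_gt_atTop (0:ℝ)] with x hx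
      exact (Real.self_lt_sinh_iff.mpr hx).le
    · exact tendsto_id
  exact (Real.tendsto_arctan_atTop.mono_right nhdsWithin_le_nhds).comp hsinh

/-- The core quantitative estimate: for each `s > 0` and offset `t`, the sum is
summable and lies within `s` of `π`. -/
lemma sech_riemann_core (s t : ℝ) (hs : 0 < s) :
    Summable (fun n : ℤ => (s / 2) * (1 / Real.cosh ((n : ℝ) * s / 2 + t)))
    ∧ π - s ≤ ∑' n : ℤ, (s / 2) * (1 / Real.cosh ((n : ℝ) * s / 2 + t))
    ∧ ∑' n : ℤ, (s / 2) * (1 / Real.cosh ((n : ℝ) * s / 2 + t)) ≤ π + s := by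
  set g : ℤ → ℝ := fun n => (s / 2) * (1 / Real.cosh ((n : ℝ) * s / 2 + t)) with hg_def
  set h : ℝ := s / 2 with hh_def
  have hh : 0 < h := by positivity
  set x : ℤ → ℝ := fun n => (n : ℝ) * s / 2 + t with hx_def
  have hxe : ∀ n : ℤ, x n = (n : ℝ) * h + t := by
    intro n; simp only [hx_def, hh_def]; ring
  have hg_nonneg : ∀ n, 0 ≤ g n := by
    intro n
    have := Real.cosh_pos ((n : ℝ) * s / 2 + t)
    simp only [hg_def]
    positivity
  have hgx : ∀ n : ℤ, g n = h * (1 / Real.cosh (x n)) := fun n => rfl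
  set m : ℤ := ⌈(-t) / h⌉ with hm_def
  have hx_step : ∀ n : ℤ, x (n + 1) = x n + h := by
    intro n; rw [hxe, hxe]; push_cast; ring
  have hx_mono : ∀ {j k : ℤ}, j ≤ k → x j ≤ x k := by
    intro j k hjk
    rw [hxe, hxe]
    have h1 : (j : ℝ) ≤ (k : ℝ) := by exact_mod_cast hjk
    nlinarith
  have hxm0 : 0 ≤ x m := by
    have h1 : (-t) / h ≤ (m : ℝ) := Int.le_ceil _
    have h2 : -t ≤ (m : ℝ) * h := (div_le_iff₀ hh).mp h1
    rw [hxe]; linarith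
  have hxmh : x m ≤ h := by
    have h1 : (m : ℝ) < (-t) / h + 1 := Int.ceil_lt_add_one _
    have h2 : (m : ℝ) * h < ((-t) / h + 1) * h := mul_lt_mul_of_pos_right h1 hh
    rw [add_mul, div_mul_cancel₀ _ hh.ne', one_mul] at h2
    rw [hxe]; linarith
  have hxm1 : x (m - 1) ≤ 0 := by
    have h1 := hx_step (m - 1)
    rw [sub_add_cancel] at h1
    linarith
  have hxm1' : -h ≤ x (m - 1) := by
    have h1 := hx_step (m - 1)
    rw [sub_add_cancel] at h1
    linarith
  -- ℕ-indexed grid values on each side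
  set G : ℕ → ℝ := fun k => sechPrim (x (m + k)) with hG_def
  set H : ℕ → ℝ := fun k => sechPrim (x (m - 1 - k)) with hH_def
  have hG0eq : G 0 = sechPrim (x m) := by
    simp only [hG_def, Nat.cast_zero, add_zero]
  have hH0eq : H 0 = sechPrim (x (m - 1)) := by
    simp only [hH_def, Nat.cast_zero, sub_zero]
  have hGstep : ∀ k : ℕ, x (m + (k + 1 : ℕ)) = x (m + k) + h := by
    intro k
    have e : (m + ((k + 1 : ℕ) : ℤ)) = (m + k) + 1 := by push_cast; ring
    rw [e, hx_step]
  have hHstep : ∀ k : ℕ, x (m - 1 - k) = x (m - 1 - (k + 1 : ℕ)) + h := by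
    intro k
    have e : (m - 1 - (k : ℤ)) = (m - 1 - ((k + 1 : ℕ) : ℤ)) + 1 := by push_cast; ring
    rw [e, hx_step]
  have hG0 : ∀ k : ℕ, 0 ≤ x (m + k) := fun k => hxm0.trans (hx_mono (by omega))
  have hH0 : ∀ k : ℕ, x (m - 1 - k) ≤ 0 := fun k => (hx_mono (by omega)).trans hxm1
  -- per-term bounds, positive side
  have hA_up : ∀ k : ℕ, g (m + (k + 1 : ℕ)) ≤ G (k + 1) - G k := by
    intro k
    have hb := sechPrim_incr_lower (a := x (m + k)) (b := x (m + (k + 1 : ℕ)))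
      (hG0 k) (by rw [hGstep k]; linarith)
    rw [hgx]
    simp only [hG_def]
    calc h * (1 / Real.cosh (x (m + (k + 1 : ℕ))))
        = (x (m + (k + 1 : ℕ)) - x (m + k)) * (1 / Real.cosh (x (m + (k + 1 : ℕ)))) := by
          rw [hGstep k]; ring_nf
      _ ≤ sechPrim (x (m + ((k + 1 : ℕ) : ℤ))) - sechPrim (x (m + k)) := hb
  have hA_lo : ∀ k : ℕ, G (k + 1) - G k ≤ g (m + k) := by
    intro k
    have hb := sechPrim_incr_upper (a := x (m + k)) (b := x (m + (k + 1 : ℕ)))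
      (hG0 k) (by rw [hGstep k]; linarith)
    rw [hgx]
    simp only [hG_def]
    calc sechPrim (x (m + ((k + 1 : ℕ) : ℤ))) - sechPrim (x (m + k))
        ≤ (x (m + (k + 1 : ℕ)) - x (m + k)) * (1 / Real.cosh (x (m + k))) := hb
      _ = h * (1 / Real.cosh (x (m + k))) := by rw [hGstep k]; ring_nf
  -- per-term bounds, negative side
  have hB_up : ∀ k : ℕ, g (m - 1 - (k + 1 : ℕ)) ≤ H k - H (k + 1) := by
    intro k
    have hb := sechPrim_decr_lower (a := x (m - 1 - (k + 1 : ℕ))) (b := x (m - 1 - k))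
      (hH0 k) (by rw [hHstep k]; linarith)
    rw [hgx]
    simp only [hH_def]
    calc h * (1 / Real.cosh (x (m - 1 - (k + 1 : ℕ))))
        = (x (m - 1 - k) - x (m - 1 - (k + 1 : ℕ))) * (1 / Real.cosh (x (m - 1 - (k + 1 : ℕ)))) := by
          rw [hHstep k]; ring_nf
      _ ≤ sechPrim (x (m - 1 - k)) - sechPrim (x (m - 1 - ((k + 1 : ℕ) : ℤ))) := hb
  have hB_lo : ∀ k : ℕ, H k - H (k + 1) ≤ g (m - 1 - k) := by
    intro k
    have hb := sechPrim_decr_upper (a := x (m - 1 - (k + 1 : ℕ))) (b := x (m - 1 - k))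
      (hH0 k) (by rw [hHstep k]; linarith)
    rw [hgx]
    simp only [hH_def]
    calc sechPrim (x (m - 1 - k)) - sechPrim (x (m - 1 - ((k + 1 : ℕ) : ℤ)))
        ≤ (x (m - 1 - k) - x (m - 1 - (k + 1 : ℕ))) * (1 / Real.cosh (x (m - 1 - k))) := hb
      _ = h * (1 / Real.cosh (x (m - 1 - k))) := by rw [hHstep k]; ring_nf
  -- single-term bound
  have hg_le_h : ∀ n : ℤ, g n ≤ h := by
    intro n
    rw [hgx]
    have h1 : 1 / Real.cosh (x n) ≤ 1 := by
      rw [div_le_one (Real.cosh_pos _)]; exact Real.one_le_cosh _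
    nlinarith
  -- partial-sum bounds, positive side
  have hApart_up : ∀ N : ℕ, ∑ k ∈ Finset.range N, g (m + k) ≤ h + (π / 2 - G 0) := by
    intro N
    have hG0lt : G 0 < π / 2 := sechPrim_lt _
    cases N with
    | zero =>
      simp only [Finset.range_zero, Finset.sum_empty]
      linarith
    | succ N =>
      rw [Finset.sum_range_succ']
      have h1 : ∑ k ∈ Finset.range N, g (m + (k + 1 : ℕ)) ≤ G N - G 0 := by
        calc ∑ k ∈ Finset.range N, g (m + (k + 1 : ℕ))
            ≤ ∑ k ∈ Finset.range N, (G (k + 1) - G k) :=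
              Finset.sum_le_sum fun k _ => hA_up k
          _ = G N - G 0 := Finset.sum_range_sub G N
      have h2 : g (m + ((0 : ℕ) : ℤ)) ≤ h := hg_le_h _
      have h3 : G N < π / 2 := sechPrim_lt _
      calc (∑ k ∈ Finset.range N, g (m + (k + 1 : ℕ))) + g (m + ((0 : ℕ) : ℤ))
          ≤ (G N - G 0) + h := add_le_add h1 h2
        _ ≤ h + (π / 2 - G 0) := by linarith
  have hApart_lo : ∀ N : ℕ, G N - G 0 ≤ ∑ k ∈ Finset.range N, g (m + k) := by
    intro N
    calc G N - G 0 = ∑ k ∈ Finset.range N, (G (k + 1) - G k) := (Finset.sum_range_sub G N).symm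
      _ ≤ ∑ k ∈ Finset.range N, g (m + k) := Finset.sum_le_sum fun k _ => hA_lo k
  -- partial-sum bounds, negative side
  have hBpart_up : ∀ N : ℕ, ∑ k ∈ Finset.range N, g (m - 1 - k) ≤ h + (H 0 + π / 2) := by
    intro N
    have hH0gt : -(π / 2) < H 0 := lt_sechPrim _
    cases N with
    | zero =>
      simp only [Finset.range_zero, Finset.sum_empty]
      linarith
    | succ N =>
      rw [Finset.sum_range_succ']
      have h1 : ∑ k ∈ Finset.range N, g (m - 1 - (k + 1 : ℕ)) ≤ H 0 - H N := by
        calc ∑ k ∈ Finset.range N, g (m - 1 - (k + 1 : ℕ))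
            ≤ ∑ k ∈ Finset.range N, (H k - H (k + 1)) :=
              Finset.sum_le_sum fun k _ => hB_up k
          _ = H 0 - H N := Finset.sum_range_sub' H N
      have h2 : g (m - 1 - ((0 : ℕ) : ℤ)) ≤ h := hg_le_h _
      have h3 : -(π / 2) < H N := lt_sechPrim _
      calc (∑ k ∈ Finset.range N, g (m - 1 - (k + 1 : ℕ))) + g (m - 1 - ((0 : ℕ) : ℤ))
          ≤ (H 0 - H N) + h := add_le_add h1 h2
        _ ≤ h + (H 0 + π / 2) := by linarith
  have hBpart_lo : ∀ N : ℕ, H 0 - H N ≤ ∑ k ∈ Finset.range N, g (m - 1 - k) := by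
    intro N
    calc H 0 - H N = ∑ k ∈ Finset.range N, (H k - H (k + 1)) := (Finset.sum_range_sub' H N).symm
      _ ≤ ∑ k ∈ Finset.range N, g (m - 1 - k) := Finset.sum_le_sum fun k _ => hB_lo k
  -- summability of both halves
  have hsumA : Summable fun k : ℕ => g (m + k) :=
    summable_of_sum_range_le (fun k => hg_nonneg _) hApart_up
  have hsumB : Summable fun k : ℕ => g (m - 1 - k) :=
    summable_of_sum_range_le (fun k => hg_nonneg _) hBpart_up
  -- identify with the two ℕ-halves of the shifted ℤ-sum
  set f : ℤ → ℝ := fun n => g (n + m) with hf_def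
  have hfA : (fun k : ℕ => f k) = fun k : ℕ => g (m + k) := by
    funext k
    simp only [hf_def]
    rw [add_comm]
  have hfB : (fun k : ℕ => f (-((k : ℤ) + 1))) = fun k : ℕ => g (m - 1 - k) := by
    funext k
    simp only [hf_def]
    congr 1
    ring
  have hsumf : Summable f :=
    Summable.of_nat_of_neg_add_one (hfA ▸ hsumA) (hfB ▸ hsumB)
  have hsumg : Summable g := by
    have heqv := (Equiv.addRight m).summable_iff (f := g)
    exact heqv.mp hsumf
  -- the tsum splits
  have htsum : ∑' n : ℤ, g n = (∑' k : ℕ, g (m + k)) + ∑' k : ℕ, g (m - 1 - k) := by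
    have e1 : ∑' n : ℤ, g n = ∑' n : ℤ, f n := ((Equiv.addRight m).tsum_eq g).symm
    rw [e1, tsum_of_nat_of_neg_add_one (hfA ▸ hsumA) (hfB ▸ hsumB), hfA, hfB]
  -- limits of G and H
  have hGlim : Tendsto G atTop (nhds (π / 2)) := by
    have hxlim : Tendsto (fun k : ℕ => x (m + k)) atTop atTop := by
      have heq : (fun k : ℕ => x (m + k)) = fun k : ℕ => (k : ℝ) * h + ((m : ℝ) * h + t) := by
        funext k; rw [hxe]; push_cast; ring
      rw [heq]
      exact tendsto_atTop_add_const_right atTop _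
        (tendsto_natCast_atTop_atTop.atTop_mul_const hh)
    exact tendsto_sechPrim_atTop.comp hxlim
  have hHlim : Tendsto H atTop (nhds (-(π / 2))) := by
    have heq : H = fun k : ℕ => - sechPrim ((k : ℝ) * h + (- x (m - 1))) := by
      funext k
      simp only [hH_def]
      rw [← sechPrim_neg]
      congr 1
      rw [hxe, hxe]
      push_cast
      ring
    rw [heq]
    have hxlim : Tendsto (fun k : ℕ => (k : ℝ) * h + (- x (m - 1))) atTop atTop :=
      tendsto_atTop_add_const_right atTop _
        (tendsto_natCast_atTop_atTop.atTop_mul_const hh)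
    exact (tendsto_sechPrim_atTop.comp hxlim).neg
  -- bounds on the half-sums
  set A : ℝ := ∑' k : ℕ, g (m + k) with hA_def
  set B : ℝ := ∑' k : ℕ, g (m - 1 - k) with hB_def
  have hA_up' : A ≤ h + (π / 2 - G 0) :=
    Real.tsum_le_of_sum_range_le (fun k => hg_nonneg _) hApart_up
  have hB_up' : B ≤ h + (H 0 + π / 2) :=
    Real.tsum_le_of_sum_range_le (fun k => hg_nonneg _) hBpart_up
  have hA_lo' : π / 2 - G 0 ≤ A := by
    have hlim : Tendsto (fun N : ℕ => G N - G 0) atTop (nhds (π / 2 - G 0)) :=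
      hGlim.sub_const _
    apply le_of_tendsto hlim
    filter_upwards with N
    exact (hApart_lo N).trans (Summable.sum_le_tsum _ (fun k _ => hg_nonneg _) hsumA)
  have hB_lo' : H 0 + π / 2 ≤ B := by
    have hlim : Tendsto (fun N : ℕ => H 0 - H N) atTop (nhds (H 0 + π / 2)) := by
      have := (tendsto_const_nhds (x := H 0) (f := atTop (α := ℕ))).sub hHlim
      simpa [sub_neg_eq_add] using this
    apply le_of_tendsto hlim
    filter_upwards with N
    exact (hBpart_lo N).trans (Summable.sum_le_tsum _ (fun k _ => hg_nonneg _) hsumB)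
  -- bounds on G 0 and H 0
  have hG0_nonneg : 0 ≤ G 0 := by
    rw [hG0eq, ← sechPrim_zero]
    exact sechPrim_mono hxm0
  have hG0_le : G 0 ≤ h := by
    rw [hG0eq]
    have h1 : sechPrim (x m) ≤ sechPrim h := sechPrim_mono hxmh
    have h2 : sechPrim h - sechPrim 0 ≤ h - 0 := sechPrim_sub_le hh.le
    rw [sechPrim_zero] at h2
    linarith
  have hH0_nonpos : H 0 ≤ 0 := by
    rw [hH0eq, ← sechPrim_zero]
    exact sechPrim_mono hxm1
  have hH0_ge : -h ≤ H 0 := by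
    rw [hH0eq]
    have h1 : sechPrim (-h) ≤ sechPrim (x (m - 1)) := sechPrim_mono hxm1'
    have h2 : sechPrim h - sechPrim 0 ≤ h - 0 := sechPrim_sub_le hh.le
    rw [sechPrim_zero] at h2
    rw [sechPrim_neg] at h1
    linarith
  refine ⟨hsumg, ?_, ?_⟩
  · rw [htsum]
    have : h + h = s := by rw [hh_def]; ring
    linarith
  · rw [htsum]
    have : h + h = s := by rw [hh_def]; ring
    linarith

/-- Riemann-sum limit: for any offset function `θ : ℝ → ℝ`, the sums
`∑_{n∈ℤ} (s/2)·sech(n·s/2 + θ(s))` are absolutely convergent for `s > 0` and tend to `π`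
as `s → 0⁺`. -/
theorem tendsto_sech_riemann_sum (θ : ℝ → ℝ) :
    (∀ s > 0, Summable fun n : ℤ => (s / 2) * (1 / Real.cosh ((n : ℝ) * s / 2 + θ s)))
    ∧ Tendsto (fun s : ℝ => ∑' n : ℤ, (s / 2) * (1 / Real.cosh ((n : ℝ) * s / 2 + θ s)))
        (nhdsWithin 0 (Set.Ioi 0)) (nhds π) := by
  constructor
  · intro s hs
    exact (sech_riemann_core s (θ s) hs).1
  · apply tendsto_of_tendsto_of_tendsto_of_le_of_le'
      (g := fun s : ℝ => π - s) (h := fun s : ℝ => π + s)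
    · have : Tendsto (fun s : ℝ => π - s) (nhds 0) (nhds π) := by
        have := (tendsto_const_nhds (x := π) (f := nhds (0:ℝ))).sub tendsto_id
        simpa using this
      exact this.mono_left nhdsWithin_le_nhds
    · have : Tendsto (fun s : ℝ => π + s) (nhds 0) (nhds π) := by
        have := (tendsto_const_nhds (x := π) (f := nhds (0:ℝ))).add tendsto_id
        simpa using this
      exact this.mono_left nhdsWithin_le_nhds
    · filter_upwards [self_mem_nhdsWithin] with s hs
      exact (sech_riemann_core s (θ s) hs).2.1
    · filter_upwards [self_mem_nhdsWithin] with s hs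
      exact (sech_riemann_core s (θ s) hs).2.2
end
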